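/- For every t ∈ ℝ and z ∈ ℂ, the function H satisfies the backwards heat equation: the derivative of t ↦ H_t(z) at t equals the negative of the second complex derivative of H_t at z, i.e. ∂_t H_t(z) = −∂_{zz} H_t(z). -/

import Mathlib

open Real MeasureTheory Set Filter
set_option maxHeartbeats 1000000

noncomputable def Phi (u : ℝ) : ℝ :=
  ∑' n : ℕ, (2 * Real.pi ^ 2 * (n + 1 : ℝ) ^ 4 * Real.exp (9 * u)
      - 3 * Real.pi * (n + 1 : ℝ) ^ 2 * Real.exp (5 * u))
    * Real.exp (-Real.pi * (n + 1 : ℝ) ^ 2 * Real.exp (4 * u))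

noncomputable def phiTerm (n : ℕ) (u : ℝ) : ℝ :=
  (2 * Real.pi ^ 2 * (n + 1 : ℝ) ^ 4 * Real.exp (9 * u)
      - 3 * Real.pi * (n + 1 : ℝ) ^ 2 * Real.exp (5 * u))
    * Real.exp (-Real.pi * (n + 1 : ℝ) ^ 2 * Real.exp (4 * u))

lemma Phi_eq (u : ℝ) : Phi u = ∑' n : ℕ, phiTerm n u := rfl

lemma summable_aux {q : ℝ} (hq0 : 0 ≤ q) (hq1 : q < 1) :
    Summable (fun n : ℕ => ((n : ℝ) + 1) ^ 4 * q ^ (n + 1)) := by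
  have h : Summable (fun n : ℕ => (n : ℝ) ^ 4 * q ^ n) :=
    summable_pow_mul_geometric_of_norm_lt_one 4
      (by rwa [Real.norm_eq_abs, abs_of_nonneg hq0])
  have h2 : Summable (fun n : ℕ => ((n + 1 : ℕ) : ℝ) ^ 4 * q ^ (n + 1)) :=
    (summable_nat_add_iff 1).2 h
  simpa using h2

lemma phiTerm_abs_le (n : ℕ) (u : ℝ) :
    |phiTerm n u| ≤ (2 * Real.pi ^ 2 + 3 * Real.pi) * ((n:ℝ) + 1) ^ 4
      * (Real.exp (9 * u) + Real.exp (5 * u))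
      * Real.exp (-Real.pi * ((n:ℝ) + 1) ^ 2 * Real.exp (4 * u)) := by
  rw [phiTerm, abs_mul, abs_of_nonneg (Real.exp_pos _).le]
  gcongr
  have h1 : (1:ℝ) ≤ ((n:ℝ)+1) := by
    have := Nat.cast_nonneg (α := ℝ) n; linarith
  have h2 : ((n:ℝ)+1)^2 ≤ ((n:ℝ)+1)^4 := pow_le_pow_right₀ h1 (by norm_num)
  have hpi := Real.pi_pos
  have e9 := (Real.exp_pos (9*u)).le
  have e5 := (Real.exp_pos (5*u)).le
  have h4 : (0:ℝ) ≤ ((n:ℝ)+1)^4 := by positivity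
  have q1 : 3*Real.pi*((n:ℝ)+1)^2*Real.exp (5*u) ≤ 3*Real.pi*((n:ℝ)+1)^4*Real.exp (5*u) := by
    have : (0:ℝ) ≤ 3*Real.pi := by linarith
    have := mul_le_mul_of_nonneg_right (mul_le_mul_of_nonneg_left h2 this) e5
    linarith
  have p1 : (0:ℝ) ≤ 2*Real.pi^2*((n:ℝ)+1)^4*Real.exp (5*u) := by positivity
  have p2 : (0:ℝ) ≤ 3*Real.pi*((n:ℝ)+1)^4*Real.exp (9*u) := by positivity
  have p4 : (0:ℝ) ≤ 3*Real.pi*((n:ℝ)+1)^2*Real.exp (5*u) := by positivity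
  have p5 : (0:ℝ) ≤ 2*Real.pi^2*((n:ℝ)+1)^4*Real.exp (9*u) := by positivity
  have expand : (2 * Real.pi ^ 2 + 3 * Real.pi) * ((n:ℝ) + 1) ^ 4
      * (Real.exp (9 * u) + Real.exp (5 * u))
      = 2*Real.pi^2*((n:ℝ)+1)^4*Real.exp (9*u) + 2*Real.pi^2*((n:ℝ)+1)^4*Real.exp (5*u)
        + 3*Real.pi*((n:ℝ)+1)^4*Real.exp (9*u) + 3*Real.pi*((n:ℝ)+1)^4*Real.exp (5*u) := by
    ring
  rw [abs_sub_le_iff, expand]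
  constructor <;> linarith

lemma summable_phiTerm (u : ℝ) : Summable (fun n : ℕ => phiTerm n u) := by
  set E := Real.exp (4 * u) with hE
  have hE0 : 0 < E := Real.exp_pos _
  set q := Real.exp (-Real.pi * E) with hq
  have hq0 : 0 ≤ q := (Real.exp_pos _).le
  have hq1 : q < 1 := by
    rw [hq]
    have : 0 < Real.pi * E := mul_pos Real.pi_pos hE0
    calc Real.exp (-Real.pi * E) < Real.exp 0 := Real.exp_lt_exp.2 (by linarith)
      _ = 1 := Real.exp_zero
  apply Summable.of_abs
  refine Summable.of_nonneg_of_le (fun n => abs_nonneg _)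
    (f := fun n : ℕ => ((2 * Real.pi ^ 2 + 3 * Real.pi) * (Real.exp (9*u) + Real.exp (5*u)))
      * (((n:ℝ) + 1) ^ 4 * q ^ (n + 1))) ?_ ?_
  · intro n
    refine (phiTerm_abs_le n u).trans ?_
    have key : Real.exp (-Real.pi * ((n:ℝ) + 1) ^ 2 * E) ≤ q ^ (n + 1) := by
      rw [hq, ← Real.exp_nat_mul]
      apply Real.exp_le_exp.2
      have h1 : ((n:ℝ)+1) ≤ ((n:ℝ)+1)^2 := by nlinarith [Nat.cast_nonneg (α := ℝ) n]
      have : ((n+1 : ℕ) : ℝ) = (n:ℝ)+1 := by push_cast; ring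
      rw [this]
      have hn : (0:ℝ) ≤ (n:ℝ) := Nat.cast_nonneg n
      nlinarith [Real.pi_pos, mul_pos Real.pi_pos hE0]
    calc (2 * Real.pi ^ 2 + 3 * Real.pi) * ((n:ℝ) + 1) ^ 4
          * (Real.exp (9 * u) + Real.exp (5 * u))
          * Real.exp (-Real.pi * ((n:ℝ) + 1) ^ 2 * E)
        ≤ (2 * Real.pi ^ 2 + 3 * Real.pi) * ((n:ℝ) + 1) ^ 4
          * (Real.exp (9 * u) + Real.exp (5 * u)) * q ^ (n + 1) := by
          have : (0:ℝ) ≤ (2 * Real.pi ^ 2 + 3 * Real.pi) * ((n:ℝ) + 1) ^ 4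
            * (Real.exp (9 * u) + Real.exp (5 * u)) := by positivity
          exact mul_le_mul_of_nonneg_left key this
      _ = ((2 * Real.pi ^ 2 + 3 * Real.pi) * (Real.exp (9*u) + Real.exp (5*u)))
          * (((n:ℝ) + 1) ^ 4 * q ^ (n + 1)) := by ring

  · exact (summable_aux hq0 hq1).mul_left _

lemma continuous_phiTerm (n : ℕ) : Continuous (phiTerm n) := by
  unfold phiTerm; continuity

lemma measurable_phi : Measurable Phi := by
  apply measurable_of_tendsto_metrizable
    (f := fun N u => ∑ n ∈ Finset.range N, phiTerm n u)
  · exact fun N => (continuous_finset_sum _ fun n _ => continuous_phiTerm n).measurable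
  · rw [tendsto_pi_nhds]
    intro u
    exact (summable_phiTerm u).hasSum.tendsto_sum_nat

noncomputable def phiC : ℝ :=
  ∑' n : ℕ, 2 * (2 * Real.pi ^ 2 + 3 * Real.pi) * ((n:ℝ) + 1) ^ 4
    * Real.exp (-Real.pi * (((n:ℝ) + 1) ^ 2 - 1))

lemma summable_phiA : Summable (fun n : ℕ => 2 * (2 * Real.pi ^ 2 + 3 * Real.pi) * ((n:ℝ) + 1) ^ 4
    * Real.exp (-Real.pi * (((n:ℝ) + 1) ^ 2 - 1))) := by
  set q : ℝ := Real.exp (-Real.pi) with hq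
  have hq0 : 0 ≤ q := (Real.exp_pos _).le
  have hq1 : q < 1 := by
    rw [hq]
    calc Real.exp (-Real.pi) < Real.exp 0 := Real.exp_lt_exp.2 (by linarith [Real.pi_pos])
      _ = 1 := Real.exp_zero
  refine Summable.of_nonneg_of_le (fun n => by positivity)
    (f := fun n : ℕ => (2 * (2 * Real.pi ^ 2 + 3 * Real.pi) / q)
      * (((n:ℝ) + 1) ^ 4 * q ^ (n + 1))) ?_ ?_
  · intro n
    have hqn : q ^ (n + 1) = Real.exp (-Real.pi * ((n:ℝ) + 1)) := by
      rw [hq, ← Real.exp_nat_mul]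
      congr 1
      push_cast; ring
    have hexp : Real.exp (-Real.pi * (((n:ℝ) + 1) ^ 2 - 1)) ≤ Real.exp (-Real.pi * (n:ℝ)) := by
      apply Real.exp_le_exp.2
      have hn : (0:ℝ) ≤ (n:ℝ) := Nat.cast_nonneg n
      have h' : (n:ℝ) ≤ ((n:ℝ) + 1) ^ 2 - 1 := by nlinarith
      nlinarith [mul_le_mul_of_nonneg_left h' Real.pi_pos.le]
    have hqpos : 0 < q := Real.exp_pos _
    have : (2 * (2 * Real.pi ^ 2 + 3 * Real.pi) / q) * (((n:ℝ) + 1) ^ 4 * q ^ (n + 1))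
        = 2 * (2 * Real.pi ^ 2 + 3 * Real.pi) * ((n:ℝ) + 1) ^ 4 * (q ^ (n+1) / q) := by
      field_simp
    rw [this, hqn]
    have h2 : Real.exp (-Real.pi * ((n:ℝ) + 1)) / q = Real.exp (-Real.pi * (n:ℝ)) := by
      rw [hq, ← Real.exp_sub]; congr 1; ring
    rw [h2]
    have hc : (0:ℝ) ≤ 2 * (2 * Real.pi ^ 2 + 3 * Real.pi) * ((n:ℝ) + 1) ^ 4 := by positivity
    exact mul_le_mul_of_nonneg_left hexp hc
  · exact (summable_aux hq0 hq1).mul_left _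

lemma phiC_nonneg : 0 ≤ phiC := tsum_nonneg (fun n => by positivity)

lemma phi_abs_le {u : ℝ} (hu : 0 ≤ u) :
    |Phi u| ≤ phiC * Real.exp (9 * u - Real.pi * Real.exp (4 * u)) := by
  set E := Real.exp (4 * u) with hE
  have hE1 : 1 ≤ E := by
    rw [hE]; calc (1:ℝ) = Real.exp 0 := Real.exp_zero.symm
      _ ≤ Real.exp (4 * u) := Real.exp_le_exp.2 (by linarith)
  have key : ∀ n : ℕ, |phiTerm n u| ≤ (2 * (2 * Real.pi ^ 2 + 3 * Real.pi) * ((n:ℝ) + 1) ^ 4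
      * Real.exp (-Real.pi * (((n:ℝ) + 1) ^ 2 - 1))) * Real.exp (9 * u - Real.pi * E) := by
    intro n
    refine (phiTerm_abs_le n u).trans ?_
    have h59 : Real.exp (5 * u) ≤ Real.exp (9 * u) := Real.exp_le_exp.2 (by linarith)
    have hsplit : Real.exp (-Real.pi * ((n:ℝ) + 1) ^ 2 * E)
        ≤ Real.exp (-Real.pi * (((n:ℝ) + 1) ^ 2 - 1)) * Real.exp (-Real.pi * E) := by
      rw [← Real.exp_add]
      apply Real.exp_le_exp.2
      have hn1 : (1:ℝ) ≤ ((n:ℝ) + 1) ^ 2 := by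
        have : (0:ℝ) ≤ (n:ℝ) := Nat.cast_nonneg n
        nlinarith
      nlinarith [Real.pi_pos, mul_nonneg Real.pi_pos.le
        (mul_nonneg (sub_nonneg.2 hn1) (sub_nonneg.2 hE1))]
    have hc : (0:ℝ) ≤ (2 * Real.pi ^ 2 + 3 * Real.pi) * ((n:ℝ) + 1) ^ 4 := by positivity
    calc (2 * Real.pi ^ 2 + 3 * Real.pi) * ((n:ℝ) + 1) ^ 4
        * (Real.exp (9 * u) + Real.exp (5 * u)) * Real.exp (-Real.pi * ((n:ℝ) + 1) ^ 2 * E)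
        ≤ (2 * Real.pi ^ 2 + 3 * Real.pi) * ((n:ℝ) + 1) ^ 4 * (2 * Real.exp (9 * u))
          * (Real.exp (-Real.pi * (((n:ℝ) + 1) ^ 2 - 1)) * Real.exp (-Real.pi * E)) := by
          apply mul_le_mul
          · apply mul_le_mul_of_nonneg_left (by linarith) hc
          · exact hsplit
          · exact (Real.exp_pos _).le
          · positivity
      _ = (2 * (2 * Real.pi ^ 2 + 3 * Real.pi) * ((n:ℝ) + 1) ^ 4
          * Real.exp (-Real.pi * (((n:ℝ) + 1) ^ 2 - 1)))
          * (Real.exp (9 * u) * Real.exp (-Real.pi * E)) := by ring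
      _ = (2 * (2 * Real.pi ^ 2 + 3 * Real.pi) * ((n:ℝ) + 1) ^ 4
          * Real.exp (-Real.pi * (((n:ℝ) + 1) ^ 2 - 1))) * Real.exp (9 * u - Real.pi * E) := by
          rw [← Real.exp_add]; ring_nf
  have hsum_abs : Summable (fun n : ℕ => |phiTerm n u|) := (summable_phiTerm u).abs
  calc |Phi u| = |∑' n, phiTerm n u| := by rw [Phi_eq]
    _ ≤ ∑' n : ℕ, |phiTerm n u| := by
        have h := norm_tsum_le_tsum_norm (f := fun n : ℕ => phiTerm n u)
          (by simpa [Real.norm_eq_abs] using hsum_abs)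
        simpa [Real.norm_eq_abs] using h
    _ ≤ ∑' n : ℕ, (2 * (2 * Real.pi ^ 2 + 3 * Real.pi) * ((n:ℝ) + 1) ^ 4
          * Real.exp (-Real.pi * (((n:ℝ) + 1) ^ 2 - 1))) * Real.exp (9 * u - Real.pi * E) :=
        Summable.tsum_le_tsum key hsum_abs (summable_phiA.mul_right _)
    _ = phiC * Real.exp (9 * u - Real.pi * E) := by
        rw [tsum_mul_right]; rfl



lemma norm_cexp_mul_I_le (w : ℂ) : ‖Complex.exp (w * Complex.I)‖ ≤ Real.exp ‖w‖ := by
  rw [Complex.norm_exp]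
  apply Real.exp_le_exp.2
  calc (w * Complex.I).re ≤ ‖w * Complex.I‖ := Complex.re_le_norm _
    _ = ‖w‖ := by simp

lemma norm_complex_cos_le (w : ℂ) : ‖Complex.cos w‖ ≤ Real.exp ‖w‖ := by
  have h1 := norm_cexp_mul_I_le w
  have h2 := norm_cexp_mul_I_le (-w)
  rw [norm_neg] at h2
  have h3 := (norm_add_le (Complex.exp (w * Complex.I)) (Complex.exp (-w * Complex.I)))
  have h4 : ‖(2:ℂ)‖ = 2 := by norm_num
  rw [Complex.cos, norm_div, h4]
  linarith

lemma norm_complex_sin_le (w : ℂ) : ‖Complex.sin w‖ ≤ Real.exp ‖w‖ := by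
  have h1 := norm_cexp_mul_I_le w
  have h2 := norm_cexp_mul_I_le (-w)
  rw [norm_neg] at h2
  have h3 := (norm_sub_le (Complex.exp (-w * Complex.I)) (Complex.exp (w * Complex.I)))
  have h4 : ‖(2:ℂ)‖ = 2 := by norm_num
  rw [Complex.sin, norm_div, norm_mul, h4]
  simp only [Complex.norm_I, mul_one] at *
  linarith
-- exponent bound
lemma exponent_bound (a b : ℝ) : ∃ C : ℝ, ∀ u : ℝ, 0 ≤ u →
    a * u ^ 2 + b * u - Real.pi * Real.exp (4 * u) ≤ C - u := by
  set K := |a| + |b| + 2 with hK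
  refine ⟨2 * K ^ 3, fun u hu => ?_⟩
  have hcube : (4 * u) ^ 3 / 6 ≤ Real.exp (4 * u) := by
    have := Real.pow_div_factorial_le_exp (x := 4 * u) (by linarith) 3
    simpa [Nat.factorial] using this
  have hpi : (3 : ℝ) ≤ Real.pi := by
    have := Real.pi_gt_three; linarith
  have hexp_pos : (0:ℝ) < Real.exp (4 * u) := Real.exp_pos _
  have h32 : 32 * u ^ 3 ≤ Real.pi * Real.exp (4 * u) := by
    nlinarith [pow_nonneg hu 3]
  have hK2 : (2:ℝ) ≤ K := by have := abs_nonneg a; have := abs_nonneg b; linarith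
  have haK : a ≤ K := by cases abs_cases a <;> cases abs_cases b <;> linarith
  have hbK : b + 1 ≤ K := by cases abs_cases a <;> cases abs_cases b <;> linarith
  rcases le_or_gt u K with h | h
  · nlinarith [sq_nonneg u, pow_nonneg hu 3, sq_nonneg (u - K), sq_nonneg (u + K),
      mul_nonneg (mul_nonneg hu hu) hu]
  · have h1 : (K - a) * u ^ 2 ≥ 0 := mul_nonneg (by linarith) (sq_nonneg u)
    have h2 : (K - (b + 1)) * u ≥ 0 := mul_nonneg (by linarith) hu
    have h3 : (u - K) * u ^ 2 ≥ 0 := mul_nonneg (by linarith) (sq_nonneg u)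
    have h4 : (u - K) * u ≥ 0 := mul_nonneg (by linarith) hu
    have h5 : (u - 2) * u ^ 2 ≥ 0 := mul_nonneg (by linarith) (sq_nonneg u)
    have h6 : (0:ℝ) ≤ K ^ 3 := by positivity
    nlinarith [pow_nonneg hu 3]

-- master integrability lemma
lemma integrable_master (k : ℕ) (a b : ℝ) :
    IntegrableOn (fun u : ℝ => u ^ k * Real.exp (a * u ^ 2 + b * u - Real.pi * Real.exp (4 * u)))
      (Ioi (0:ℝ)) := by
  obtain ⟨C, hC⟩ := exponent_bound a (b + k)
  have hcont : Continuous (fun u : ℝ => u ^ k * Real.exp (a * u ^ 2 + b * u - Real.pi * Real.exp (4 * u))) := by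
    continuity
  refine Integrable.mono' ((exp_neg_integrableOn_Ioi 0 (b := 1) one_pos).const_mul (Real.exp C))
    (hcont.aestronglyMeasurable.restrict) ?_
  filter_upwards [ae_restrict_mem measurableSet_Ioi] with u hu
  have hu0 : (0:ℝ) ≤ u := le_of_lt hu
  have hpk : u ^ k ≤ Real.exp ((k : ℝ) * u) := by
    calc u ^ k ≤ Real.exp u ^ k := by
          exact pow_le_pow_left₀ hu0 (by linarith [Real.add_one_le_exp u]) k
      _ = Real.exp ((k : ℝ) * u) := by rw [← Real.exp_nat_mul]
  have key : (k:ℝ) * u + (a * u ^ 2 + b * u - Real.pi * Real.exp (4 * u)) ≤ C - u := by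
    have := hC u hu0; nlinarith
  calc ‖u ^ k * Real.exp (a * u ^ 2 + b * u - Real.pi * Real.exp (4 * u))‖
      = u ^ k * Real.exp (a * u ^ 2 + b * u - Real.pi * Real.exp (4 * u)) := by
        rw [Real.norm_eq_abs, abs_of_nonneg (by positivity)]
    _ ≤ Real.exp ((k:ℝ) * u) * Real.exp (a * u ^ 2 + b * u - Real.pi * Real.exp (4 * u)) := by
        gcongr
    _ = Real.exp ((k:ℝ) * u + (a * u ^ 2 + b * u - Real.pi * Real.exp (4 * u))) := by
        rw [← Real.exp_add]
    _ ≤ Real.exp (C - u) := Real.exp_le_exp.2 key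
    _ = Real.exp C * Real.exp (-1 * u) := by rw [← Real.exp_add]; ring_nf


lemma master_bound {k m : ℕ} {s a B u : ℝ} (hs : s ≤ a) (hu : 0 < u) {X : ℂ}
    (hX : ‖X‖ ≤ u ^ m * Real.exp (B * u)) {Y : ℝ}
    (hY : |Y| ≤ u ^ k * (Real.exp (s * u ^ 2) * |Phi u|)) :
    ‖(Y : ℂ) * X‖ ≤ phiC * (u ^ (k + m) *
      Real.exp (a * u ^ 2 + (9 + B) * u - Real.pi * Real.exp (4 * u))) := by
  have hu0 : (0:ℝ) ≤ u := hu.le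
  have h1 : ‖(Y : ℂ) * X‖ = |Y| * ‖X‖ := by
    rw [norm_mul, Complex.norm_real, Real.norm_eq_abs]
  have hphi := phi_abs_le hu0
  have hexp : Real.exp (s * u ^ 2) ≤ Real.exp (a * u ^ 2) :=
    Real.exp_le_exp.2 (by nlinarith [sq_nonneg u])
  have hX0 : (0:ℝ) ≤ ‖X‖ := norm_nonneg _
  calc ‖(Y : ℂ) * X‖ = |Y| * ‖X‖ := h1
    _ ≤ (u ^ k * (Real.exp (s * u ^ 2) * |Phi u|)) * (u ^ m * Real.exp (B * u)) := by
        apply mul_le_mul hY hX hX0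
        positivity
    _ ≤ (u ^ k * (Real.exp (a * u ^ 2) * (phiC * Real.exp (9 * u - Real.pi * Real.exp (4 * u)))))
        * (u ^ m * Real.exp (B * u)) := by
        gcongr
    _ = phiC * (u ^ (k + m) * (Real.exp (a * u ^ 2) * Real.exp (9 * u - Real.pi * Real.exp (4 * u))
        * Real.exp (B * u))) := by rw [pow_add]; ring
    _ = phiC * (u ^ (k + m) *
        Real.exp (a * u ^ 2 + (9 + B) * u - Real.pi * Real.exp (4 * u))) := by
        rw [← Real.exp_add, ← Real.exp_add]; ring_nf

noncomputable def H (t : ℝ) (z : ℂ) : ℂ :=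
  ∫ u in Set.Ioi (0 : ℝ),
    ((Real.exp (t * u ^ 2) * Phi u : ℝ) : ℂ) * Complex.cos (z * (u : ℂ))

-- measurability helpers
lemma meas_exp_sq (s : ℝ) : Measurable (fun u : ℝ => Real.exp (s * u ^ 2)) :=
  (Real.continuous_exp.comp (continuous_const.mul (continuous_pow 2))).measurable

lemma aesm_main (s : ℝ) (g : ℝ → ℂ) (hg : Measurable g) :
    AEStronglyMeasurable (fun u : ℝ => ((Real.exp (s * u ^ 2) * Phi u : ℝ) : ℂ) * g u)
      (volume.restrict (Ioi (0:ℝ))) := by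
  apply Measurable.aestronglyMeasurable
  apply Measurable.mul _ hg
  exact Complex.measurable_ofReal.comp ((meas_exp_sq s).mul measurable_phi)

lemma aesm_main2 (s : ℝ) (g : ℝ → ℂ) (hg : Measurable g) :
    AEStronglyMeasurable (fun u : ℝ => ((u ^ 2 * Real.exp (s * u ^ 2) * Phi u : ℝ) : ℂ) * g u)
      (volume.restrict (Ioi (0:ℝ))) := by
  apply Measurable.aestronglyMeasurable
  apply Measurable.mul _ hg
  exact Complex.measurable_ofReal.comp ((((measurable_id.pow_const 2).mul (meas_exp_sq s)).mul measurable_phi))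

lemma meas_cos (w : ℂ) : Measurable (fun u : ℝ => Complex.cos (w * (u:ℂ))) :=
  (Complex.continuous_cos.comp (continuous_const.mul Complex.continuous_ofReal)).measurable

lemma integrable_H_integrand (s : ℝ) (w : ℂ) :
    Integrable (fun u : ℝ => ((Real.exp (s * u ^ 2) * Phi u : ℝ) : ℂ) * Complex.cos (w * (u:ℂ)))
      (volume.restrict (Ioi (0:ℝ))) := by
  refine Integrable.mono' (((integrable_master 0 s (9 + ‖w‖)).const_mul phiC))
    (aesm_main s _ (meas_cos w)) ?_
  filter_upwards [ae_restrict_mem measurableSet_Ioi] with u hu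
  have hu' : (0:ℝ) < u := hu
  have hX : ‖Complex.cos (w * (u:ℂ))‖ ≤ u ^ 0 * Real.exp (‖w‖ * u) := by
    rw [pow_zero, one_mul]
    refine (norm_complex_cos_le _).trans (Real.exp_le_exp.2 ?_)
    rw [norm_mul, Complex.norm_real, Real.norm_eq_abs, abs_of_pos hu']
  have hY : |Real.exp (s * u ^ 2) * Phi u| ≤ u ^ 0 * (Real.exp (s * u ^ 2) * |Phi u|) := by
    rw [pow_zero, one_mul, abs_mul, abs_of_pos (Real.exp_pos _)]
  exact master_bound le_rfl hu' hX hY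

lemma hasDerivAt_t (t : ℝ) (z : ℂ) :
    HasDerivAt (fun s : ℝ => H s z)
      (∫ u in Ioi (0:ℝ), ((u ^ 2 * Real.exp (t * u ^ 2) * Phi u : ℝ) : ℂ)
        * Complex.cos (z * (u:ℂ))) t := by
  set F : ℝ → ℝ → ℂ := fun s u => ((Real.exp (s * u ^ 2) * Phi u : ℝ) : ℂ)
    * Complex.cos (z * (u:ℂ)) with hF
  set F' : ℝ → ℝ → ℂ := fun s u => ((u ^ 2 * Real.exp (s * u ^ 2) * Phi u : ℝ) : ℂ)
    * Complex.cos (z * (u:ℂ)) with hF'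
  have key := hasDerivAt_integral_of_dominated_loc_of_deriv_le (F := F) (F' := F')
    (x₀ := t) (s := Metric.ball t 1) (μ := volume.restrict (Ioi (0:ℝ)))
    (bound := fun u => phiC * (u ^ 2 *
      Real.exp ((|t| + 1) * u ^ 2 + (9 + ‖z‖) * u - Real.pi * Real.exp (4 * u))))
    (Metric.ball_mem_nhds _ one_pos)
    (Eventually.of_forall fun s => aesm_main s _ (meas_cos z))
    (integrable_H_integrand t z)
    (aesm_main2 t _ (meas_cos z))
    ?_ ?_ ?_
  · exact key.2
  · -- bound
    filter_upwards [ae_restrict_mem measurableSet_Ioi] with u hu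
    intro s hs
    have hu' : (0:ℝ) < u := hu
    have hst : s ≤ |t| + 1 := by
      rw [Metric.mem_ball, Real.dist_eq] at hs
      cases abs_cases (s - t) <;> cases abs_cases t <;> linarith
    have hX : ‖Complex.cos (z * (u:ℂ))‖ ≤ u ^ 0 * Real.exp (‖z‖ * u) := by
      rw [pow_zero, one_mul]
      refine (norm_complex_cos_le _).trans (Real.exp_le_exp.2 ?_)
      rw [norm_mul, Complex.norm_real, Real.norm_eq_abs, abs_of_pos hu']
    have hY : |u ^ 2 * Real.exp (s * u ^ 2) * Phi u|
        ≤ u ^ 2 * (Real.exp (s * u ^ 2) * |Phi u|) := by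
      rw [abs_mul, abs_mul, abs_of_pos (Real.exp_pos _), abs_of_pos (pow_pos hu' 2), mul_assoc]
    exact master_bound hst hu' hX hY
  · exact (integrable_master 2 (|t| + 1) (9 + ‖z‖)).const_mul phiC
  · -- differentiability
    filter_upwards [ae_restrict_mem measurableSet_Ioi] with u hu
    intro s hs
    have h1 : HasDerivAt (fun s : ℝ => s * u ^ 2) (u ^ 2) s := hasDerivAt_mul_const _
    have h2 := h1.exp
    have h3 := h2.mul_const (Phi u)
    have h4 := h3.smul_const (Complex.cos (z * (u:ℂ)))
    have hfun : (fun s : ℝ => (Real.exp (s * u ^ 2) * Phi u) • Complex.cos (z * (u:ℂ)))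
        = fun s : ℝ => F s u := by
      funext s; rw [hF]; simp [Complex.real_smul]
    rw [hfun] at h4
    convert h4 using 1
    rw [hF', Complex.real_smul]
    push_cast
    ring

lemma meas_sin (w : ℂ) : Measurable (fun u : ℝ => -Complex.sin (w * (u:ℂ)) * (u:ℂ)) := by
  apply Measurable.mul _ (Complex.measurable_ofReal)
  exact ((Complex.continuous_sin.comp (continuous_const.mul Complex.continuous_ofReal)).neg).measurable

lemma norm_ball_le {w₀ w : ℂ} (hw : w ∈ Metric.ball w₀ 1) : ‖w‖ ≤ ‖w₀‖ + 1 := by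
  rw [Metric.mem_ball, dist_eq_norm] at hw
  calc ‖w‖ = ‖w₀ + (w - w₀)‖ := by ring_nf
    _ ≤ ‖w₀‖ + ‖w - w₀‖ := norm_add_le _ _
    _ ≤ ‖w₀‖ + 1 := by linarith

lemma hasDerivAt_z1 (t : ℝ) (w₀ : ℂ) :
    HasDerivAt (H t)
      (∫ u in Ioi (0:ℝ), ((Real.exp (t * u ^ 2) * Phi u : ℝ) : ℂ)
        * (-Complex.sin (w₀ * (u:ℂ)) * (u:ℂ))) w₀ := by
  set F : ℂ → ℝ → ℂ := fun w u => ((Real.exp (t * u ^ 2) * Phi u : ℝ) : ℂ)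
    * Complex.cos (w * (u:ℂ)) with hF
  set F' : ℂ → ℝ → ℂ := fun w u => ((Real.exp (t * u ^ 2) * Phi u : ℝ) : ℂ)
    * (-Complex.sin (w * (u:ℂ)) * (u:ℂ)) with hF'
  have key := hasDerivAt_integral_of_dominated_loc_of_deriv_le (F := F) (F' := F')
    (x₀ := w₀) (s := Metric.ball w₀ 1) (μ := volume.restrict (Ioi (0:ℝ)))
    (bound := fun u => phiC * (u ^ 1 *
      Real.exp (t * u ^ 2 + (9 + (‖w₀‖ + 1)) * u - Real.pi * Real.exp (4 * u))))
    (Metric.ball_mem_nhds _ one_pos)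
    (Eventually.of_forall fun w => aesm_main t _ (meas_cos w))
    (integrable_H_integrand t w₀)
    (aesm_main t _ (meas_sin w₀))
    ?_ ?_ ?_
  · exact key.2
  · filter_upwards [ae_restrict_mem measurableSet_Ioi] with u hu
    intro w hw
    have hu' : (0:ℝ) < u := hu
    have hX : ‖-Complex.sin (w * (u:ℂ)) * (u:ℂ)‖ ≤ u ^ 1 * Real.exp ((‖w₀‖ + 1) * u) := by
      rw [norm_mul, norm_neg, Complex.norm_real, Real.norm_eq_abs, abs_of_pos hu', pow_one,
        mul_comm]
      apply mul_le_mul_of_nonneg_left _ hu'.le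
      refine (norm_complex_sin_le _).trans (Real.exp_le_exp.2 ?_)
      rw [norm_mul, Complex.norm_real, Real.norm_eq_abs, abs_of_pos hu']
      exact mul_le_mul_of_nonneg_right (norm_ball_le hw) hu'.le
    have hY : |Real.exp (t * u ^ 2) * Phi u| ≤ u ^ 0 * (Real.exp (t * u ^ 2) * |Phi u|) := by
      rw [pow_zero, one_mul, abs_mul, abs_of_pos (Real.exp_pos _)]
    exact master_bound le_rfl hu' hX hY
  · exact (integrable_master 1 t (9 + (‖w₀‖ + 1))).const_mul phiC
  · filter_upwards [ae_restrict_mem measurableSet_Ioi] with u hu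
    intro w hw
    have h1 : HasDerivAt (fun w : ℂ => w * (u:ℂ)) (u:ℂ) w := hasDerivAt_mul_const _
    have h2 := (Complex.hasDerivAt_cos (w * (u:ℂ))).comp w h1
    have h3 := h2.const_mul ((Real.exp (t * u ^ 2) * Phi u : ℝ) : ℂ)
    exact h3

lemma meas_ncos (w : ℂ) : Measurable (fun u : ℝ => -(Complex.cos (w * (u:ℂ)) * (u:ℂ)) * (u:ℂ)) := by
  apply Measurable.mul _ (Complex.measurable_ofReal)
  exact (((Complex.continuous_cos.comp (continuous_const.mul Complex.continuous_ofReal)).mul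
    Complex.continuous_ofReal).neg).measurable

lemma integrable_z1_integrand (t : ℝ) (w₀ : ℂ) :
    Integrable (fun u : ℝ => ((Real.exp (t * u ^ 2) * Phi u : ℝ) : ℂ)
      * (-Complex.sin (w₀ * (u:ℂ)) * (u:ℂ))) (volume.restrict (Ioi (0:ℝ))) := by
  refine Integrable.mono' (((integrable_master 1 t (9 + ‖w₀‖)).const_mul phiC))
    (aesm_main t _ (meas_sin w₀)) ?_
  filter_upwards [ae_restrict_mem measurableSet_Ioi] with u hu
  have hu' : (0:ℝ) < u := hu
  have hX : ‖-Complex.sin (w₀ * (u:ℂ)) * (u:ℂ)‖ ≤ u ^ 1 * Real.exp (‖w₀‖ * u) := by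
    rw [norm_mul, norm_neg, Complex.norm_real, Real.norm_eq_abs, abs_of_pos hu', pow_one,
      mul_comm]
    apply mul_le_mul_of_nonneg_left _ hu'.le
    refine (norm_complex_sin_le _).trans (Real.exp_le_exp.2 ?_)
    rw [norm_mul, Complex.norm_real, Real.norm_eq_abs, abs_of_pos hu']
  have hY : |Real.exp (t * u ^ 2) * Phi u| ≤ u ^ 0 * (Real.exp (t * u ^ 2) * |Phi u|) := by
    rw [pow_zero, one_mul, abs_mul, abs_of_pos (Real.exp_pos _)]
  exact master_bound le_rfl hu' hX hY

lemma hasDerivAt_z2 (t : ℝ) (z : ℂ) :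
    HasDerivAt (fun w : ℂ => ∫ u in Ioi (0:ℝ), ((Real.exp (t * u ^ 2) * Phi u : ℝ) : ℂ)
        * (-Complex.sin (w * (u:ℂ)) * (u:ℂ)))
      (∫ u in Ioi (0:ℝ), ((Real.exp (t * u ^ 2) * Phi u : ℝ) : ℂ)
        * (-(Complex.cos (z * (u:ℂ)) * (u:ℂ)) * (u:ℂ))) z := by
  set F : ℂ → ℝ → ℂ := fun w u => ((Real.exp (t * u ^ 2) * Phi u : ℝ) : ℂ)
    * (-Complex.sin (w * (u:ℂ)) * (u:ℂ)) with hF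
  set F' : ℂ → ℝ → ℂ := fun w u => ((Real.exp (t * u ^ 2) * Phi u : ℝ) : ℂ)
    * (-(Complex.cos (w * (u:ℂ)) * (u:ℂ)) * (u:ℂ)) with hF'
  have key := hasDerivAt_integral_of_dominated_loc_of_deriv_le (F := F) (F' := F')
    (x₀ := z) (s := Metric.ball z 1) (μ := volume.restrict (Ioi (0:ℝ)))
    (bound := fun u => phiC * (u ^ 2 *
      Real.exp (t * u ^ 2 + (9 + (‖z‖ + 1)) * u - Real.pi * Real.exp (4 * u))))
    (Metric.ball_mem_nhds _ one_pos)
    (Eventually.of_forall fun w => aesm_main t _ (meas_sin w))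
    (integrable_z1_integrand t z)
    (aesm_main t _ (meas_ncos z))
    ?_ ?_ ?_
  · exact key.2
  · filter_upwards [ae_restrict_mem measurableSet_Ioi] with u hu
    intro w hw
    have hu' : (0:ℝ) < u := hu
    have hX : ‖-(Complex.cos (w * (u:ℂ)) * (u:ℂ)) * (u:ℂ)‖
        ≤ u ^ 2 * Real.exp ((‖z‖ + 1) * u) := by
      simp only [norm_mul, norm_neg, Complex.norm_real, Real.norm_eq_abs, abs_of_pos hu']
      have hcos : ‖Complex.cos (w * (u:ℂ))‖ ≤ Real.exp ((‖z‖ + 1) * u) := by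
        refine (norm_complex_cos_le _).trans (Real.exp_le_exp.2 ?_)
        rw [norm_mul, Complex.norm_real, Real.norm_eq_abs, abs_of_pos hu']
        exact mul_le_mul_of_nonneg_right (norm_ball_le hw) hu'.le
      calc ‖Complex.cos (w * (u:ℂ))‖ * u * u
          ≤ Real.exp ((‖z‖ + 1) * u) * u * u := by
            apply mul_le_mul_of_nonneg_right _ hu'.le
            exact mul_le_mul_of_nonneg_right hcos hu'.le
        _ = u ^ 2 * Real.exp ((‖z‖ + 1) * u) := by ring
    have hY : |Real.exp (t * u ^ 2) * Phi u| ≤ u ^ 0 * (Real.exp (t * u ^ 2) * |Phi u|) := by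
      rw [pow_zero, one_mul, abs_mul, abs_of_pos (Real.exp_pos _)]
    exact master_bound le_rfl hu' hX hY
  · exact (integrable_master 2 t (9 + (‖z‖ + 1))).const_mul phiC
  · filter_upwards [ae_restrict_mem measurableSet_Ioi] with u hu
    intro w hw
    have h1 : HasDerivAt (fun w : ℂ => w * (u:ℂ)) (u:ℂ) w := hasDerivAt_mul_const _
    have h2 := (Complex.hasDerivAt_sin (w * (u:ℂ))).comp w h1
    have h3 := (h2.neg).mul_const (u:ℂ)
    have h4 := h3.const_mul ((Real.exp (t * u ^ 2) * Phi u : ℝ) : ℂ)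
    exact h4

theorem backwards_heat_equation (t : ℝ) (z : ℂ) :
    deriv (fun s : ℝ => H s z) t = - iteratedDeriv 2 (H t) z := by
  rw [(hasDerivAt_t t z).deriv]
  have h2 : iteratedDeriv 2 (H t) z = deriv (deriv (H t)) z := by
    rw [iteratedDeriv_succ, iteratedDeriv_one]
  rw [h2]
  have hd1 : deriv (H t) = fun w : ℂ => ∫ u in Ioi (0:ℝ),
      ((Real.exp (t * u ^ 2) * Phi u : ℝ) : ℂ) * (-Complex.sin (w * (u:ℂ)) * (u:ℂ)) :=
    funext fun w => (hasDerivAt_z1 t w).deriv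
  rw [hd1, (hasDerivAt_z2 t z).deriv]
  rw [← integral_neg]
  apply integral_congr_ae
  apply Eventually.of_forall
  intro u
  push_cast
  ring
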